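/- arXiv:2007.04812 — 8 statements merged into one kernel-verified Lean document; each statement's English description precedes it below -/
import Mathlib

section
/- Let U be an ultrafilter over a set X and W an ultrafilter over a set Y. Then W is U-complete (i.e., for every family ⟨B_x : x ∈ X⟩ of sets in W there exists A ∈ U with ⋂_{x∈A} B_x ∈ W) if and only if the filter product U × W (the filter on X × Y generated by rectangles A × B with A ∈ U, B ∈ W) is an ultrafilter. -/
/-!
The Fubini product `U.curry W`, whose members are the sets `S` such that for `U`-almost every `x`
the section `{y | (x, y) ∈ S}` lies in `W`, is an ultrafilter, and it contains `U ×ˢ W`. An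
ultrafilter being maximal, `U ×ˢ W` is an ultrafilter iff it equals `U.curry W`, i.e. iff every set
with `W`-large sections over a `U`-large set contains a rectangle. That is `U`-completeness of `W`:
apply it to the set `{(x, y) | y ∈ B x}`, resp. to the sections of `S`.
-/

open Filter Set

namespace Filter

variable {X Y : Type*}

theorem prod_le_curry_iff {f : Filter X} {g : Filter Y} :
    f ×ˢ g ≤ f.curry g ↔ ∀ B : X → Set Y, (∀ x, B x ∈ g) → ∃ A ∈ f, (⋂ x ∈ A, B x) ∈ g := by
  constructor
  · intro h B hB
    have hgraph : {p : X × Y | p.2 ∈ B p.1} ∈ f ×ˢ g :=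
      h (mem_curry_iff.2 (Eventually.of_forall hB))
    obtain ⟨A, hA, T, hT, hsub⟩ := mem_prod_iff.1 hgraph
    exact ⟨A, hA, mem_of_superset hT fun y hy => mem_iInter₂.2 fun x hx => @hsub (x, y) ⟨hx, hy⟩⟩
  · intro h S hS
    set A := {x | ∀ᶠ y in g, (x, y) ∈ S}
    -- outside `A` the section is replaced by `univ`, so that every member of the family is in `g`
    obtain ⟨A', hA', hT⟩ := h (fun x => {y | x ∈ A → (x, y) ∈ S})
      fun x => eventually_imp_distrib_left.2 id
    refine mem_prod_iff.2 ⟨A ∩ A', inter_mem (mem_curry_iff.1 hS) hA', _, hT, ?_⟩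
    rintro ⟨x, y⟩ ⟨⟨hxA, hxA'⟩, hy⟩
    exact mem_iInter₂.1 hy x hxA' hxA

theorem _root_.Ultrafilter.exists_coe_eq_curry (U : Ultrafilter X) (W : Ultrafilter Y) :
    ∃ Z : Ultrafilter (X × Y), (Z : Filter (X × Y)) = (U : Filter X).curry W :=
  ⟨U.bind fun x => W.map (x, ·), rfl⟩

end Filter

/-- For ultrafilters `U` on `X` and `W` on `Y`, `W` is `U`-complete
(for every family `⟨B x : x ∈ X⟩` of sets in `W` there is `A ∈ U` with `⋂_{x ∈ A} B x ∈ W`)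
iff the filter product `U × W` (the filter on `X × Y` generated by rectangles
`A ×ˢ B` with `A ∈ U`, `B ∈ W`, i.e. `Filter.prod`) is an ultrafilter. -/
theorem stmt0 {X Y : Type*} (U : Ultrafilter X) (W : Ultrafilter Y) :
    (∀ B : X → Set Y, (∀ x, B x ∈ W) → ∃ A ∈ U, (⋂ x ∈ A, B x) ∈ W) ↔
      ∃ Z : Ultrafilter (X × Y), (Z : Filter (X × Y)) = (U : Filter X) ×ˢ (W : Filter Y) := by
  refine (prod_le_curry_iff (f := (U : Filter X)) (g := (W : Filter Y))).symm.trans ?_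
  obtain ⟨Z, hZ⟩ := U.exists_coe_eq_curry W
  constructor
  · exact fun h => ⟨Z, le_antisymm (hZ ▸ curry_le_prod) (hZ ▸ h)⟩
  · rintro ⟨Z', hZ'⟩
    have hZZ' : Z = Z' := Ultrafilter.coe_le_coe.1 (hZ ▸ hZ' ▸ curry_le_prod)
    rw [← hZ', ← hZZ', hZ]
end

section
/- Let U be an ultrafilter over a set X and W an ultrafilter over a set Y. Then the filter product U × W is an ultrafilter if and only if U × W equals the ultrafilter product U ⊗ W, where U ⊗ W = {A ⊆ X × Y : for U-almost all x, for W-almost all y, (x,y) ∈ A}. -/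
/-!
The ultrafilter product `U ⊗ W` contains every rectangle `A ×ˢ B` with `A ∈ U`, `B ∈ W`, so it
refines the filter product `U × W`. An ultrafilter admits no strictly finer proper filter, so if
`U × W` is an ultrafilter it coincides with `U ⊗ W`; conversely, if the two have the same members,
`U ⊗ W` itself witnesses that `U × W` is an ultrafilter.
-/

open Filter

namespace Ultrafilter

variable {X Y : Type*}

/-- The ultrafilter product `U ⊗ W`. -/
def tensor (U : Ultrafilter X) (W : Ultrafilter Y) : Ultrafilter (X × Y) :=
  U.bind fun x => W.map (Prod.mk x)

theorem mem_tensor {U : Ultrafilter X} {W : Ultrafilter Y} {R : Set (X × Y)} :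
    R ∈ U.tensor W ↔ {x | {y | (x, y) ∈ R} ∈ W} ∈ U :=
  Iff.rfl

theorem tensor_le_prod (U : Ultrafilter X) (W : Ultrafilter Y) :
    (U.tensor W : Filter (X × Y)) ≤ (U : Filter X) ×ˢ (W : Filter Y) :=
  fun _ hR => Eventually.curry hR

theorem eq_tensor_of_coe_eq_prod {U : Ultrafilter X} {W : Ultrafilter Y} {Z : Ultrafilter (X × Y)}
    (hZ : (Z : Filter (X × Y)) = (U : Filter X) ×ˢ (W : Filter Y)) : Z = U.tensor W :=
  (eq_of_le (hZ ▸ tensor_le_prod U W)).symm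

end Ultrafilter

/-- For ultrafilters `U` on `X` and `W` on `Y`, the filter product `U × W`
(the filter on `X × Y` generated by rectangles, i.e. `Filter.prod`) is an ultrafilter iff
`U × W` equals the ultrafilter product `U ⊗ W`, where
`R ∈ U ⊗ W ↔ {x | {y | (x,y) ∈ R} ∈ W} ∈ U`. -/
theorem stmt1 {X Y : Type*} (U : Ultrafilter X) (W : Ultrafilter Y) :
    (∃ Z : Ultrafilter (X × Y), (Z : Filter (X × Y)) = (U : Filter X) ×ˢ (W : Filter Y)) ↔
      ∀ R : Set (X × Y),
        (R ∈ (U : Filter X) ×ˢ (W : Filter Y) ↔ {x : X | {y : Y | (x, y) ∈ R} ∈ W} ∈ U) := by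
  constructor
  · rintro ⟨Z, hZ⟩ R
    rw [← hZ, Ultrafilter.eq_tensor_of_coe_eq_prod hZ]
    exact Ultrafilter.mem_tensor
  · exact fun h => ⟨U.tensor W, Filter.ext fun R => (h R).symm⟩
end

section
/- Let U be an ultrafilter over X and W an ultrafilter over Y. If U × W = U ⊗ W, then W is U-complete: for any family ⟨B_x : x ∈ X⟩ with each B_x ∈ W, there exists A ∈ U such that ⋂_{x∈A} B_x ∈ W. -/
open Filter

theorem Filter.exists_mem_biInter_mem_of_setOf_mem_prod {X Y : Type*} {f : Filter X}
    {g : Filter Y} {B : X → Set Y} (hB : {p : X × Y | p.2 ∈ B p.1} ∈ f ×ˢ g) :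
    ∃ A ∈ f, (⋂ x ∈ A, B x) ∈ g := by
  obtain ⟨A, hA, C, hC, hAC⟩ := mem_prod_iff.mp hB
  refine ⟨A, hA, mem_of_superset hC fun y hy => Set.mem_iInter₂.mpr fun x hx => ?_⟩
  exact hAC (Set.mk_mem_prod hx hy)

/-- For ultrafilters `U` on `X` and `W` on `Y`, if the filter product `U × W`
equals the ultrafilter product `U ⊗ W` (i.e. `R ∈ U ×ˢ W ↔ {x | {y | (x,y) ∈ R} ∈ W} ∈ U`
for all `R`), then `W` is `U`-complete: for any family `⟨B x : x ∈ X⟩` of sets in `W` there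
is `A ∈ U` with `⋂_{x ∈ A} B x ∈ W`. -/
theorem stmt2 {X Y : Type*} (U : Ultrafilter X) (W : Ultrafilter Y)
    (h : ∀ R : Set (X × Y),
      R ∈ (U : Filter X) ×ˢ (W : Filter Y) ↔ {x : X | {y : Y | (x, y) ∈ R} ∈ W} ∈ U) :
    ∀ B : X → Set Y, (∀ x, B x ∈ W) → ∃ A ∈ U, (⋂ x ∈ A, B x) ∈ W := by
  intro B hB
  exact exists_mem_biInter_mem_of_setOf_mem_prod ((h _).mpr (univ_mem' hB))
end

section
/- Let U and W be ultrafilters over sets X and Y respectively. If the filter product U × W is an ultrafilter, then the pushforward of U ⊗ W under the map flip(x,y) = (y,x) equals W ⊗ U. -/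
/-!
The iterated filter `U ⊗ W` (Mathlib's `Filter.curry`) is always finer than the product
`U × W`, and is never trivial for nontrivial `U`, `W`. So when `U × W` is an ultrafilter it
must coincide with `U ⊗ W`; likewise `W × U`, the image of `U × W` under `flip`, coincides
with `W ⊗ U`.
-/

open Filter

namespace Filter

variable {α β : Type*} {l : Filter α} {m : Filter β}

instance curry_neBot [NeBot l] [NeBot m] : NeBot (l.curry m) :=
  neBot_iff.2 fun h => by
    simpa [eventually_false_iff_eq_bot, NeBot.ne'] using
      mem_curry_iff.1 (h ▸ mem_bot : ∅ ∈ l.curry m)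

theorem curry_eq_prod_of_ultrafilter (Z : Ultrafilter (α × β))
    (hZ : (Z : Filter (α × β)) = l ×ˢ m) : l.curry m = l ×ˢ m := by
  have : NeBot (l ×ˢ m) := hZ ▸ Z.neBot
  obtain ⟨hl, hm⟩ := prod_neBot.1 this
  rw [← hZ]
  exact Z.unique (hZ ▸ curry_le_prod)

theorem map_swap_curry_of_ultrafilter (Z : Ultrafilter (α × β))
    (hZ : (Z : Filter (α × β)) = l ×ˢ m) : map Prod.swap (l.curry m) = m.curry l := by
  have hZ' : ((Z.map Prod.swap : Ultrafilter (β × α)) : Filter (β × α)) = m ×ˢ l := by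
    rw [Ultrafilter.coe_map, hZ, ← prod_comm]
  rw [curry_eq_prod_of_ultrafilter Z hZ, curry_eq_prod_of_ultrafilter _ hZ', ← prod_comm]

end Filter

/-- For ultrafilters `U` on `X` and `W` on `Y`, if the filter product `U × W`
(i.e. `Filter.prod`) is an ultrafilter, then the pushforward of the ultrafilter product
`U ⊗ W` under `flip (x, y) = (y, x)` equals `W ⊗ U`.  Membership of `S ⊆ Y × X` in the
pushforward is `{x | {y | (y, x) ∈ S} ∈ W} ∈ U`, and membership in `W ⊗ U` is
`{y | {x | (y, x) ∈ S} ∈ U} ∈ W`. -/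
theorem stmt3 {X Y : Type*} (U : Ultrafilter X) (W : Ultrafilter Y)
    (h : ∃ Z : Ultrafilter (X × Y), (Z : Filter (X × Y)) = (U : Filter X) ×ˢ (W : Filter Y)) :
    ∀ S : Set (Y × X),
      ({x : X | {y : Y | (y, x) ∈ S} ∈ W} ∈ U ↔ {y : Y | {x : X | (y, x) ∈ S} ∈ U} ∈ W) := by
  obtain ⟨Z, hZ⟩ := h
  intro S
  exact Filter.ext_iff.1 (map_swap_curry_of_ultrafilter Z hZ) S
end

section
/- Let U and W be ultrafilters on sets X and Y. W is U-complete if and only if U is W-complete. -/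
/-!
`W` is `U`-complete exactly when every `S ⊆ X × Y` or its complement lies in the product
filter `U ×ˢ W`, i.e. when `U ×ˢ W` is an ultrafilter. That dichotomy is invariant under the
coordinate swap, which exchanges `U ×ˢ W` and `W ×ˢ U`.
-/

open Filter Set

section

variable {X Y : Type*}

namespace Filter

theorem forall_mem_or_compl_mem_prod_swap {f : Filter X} {g : Filter Y}
    (h : ∀ S : Set (X × Y), S ∈ f ×ˢ g ∨ Sᶜ ∈ f ×ˢ g) (S : Set (Y × X)) :
    S ∈ g ×ˢ f ∨ Sᶜ ∈ g ×ˢ f := by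
  rw [prod_comm]
  simpa only [mem_map, preimage_compl] using h (Prod.swap ⁻¹' S)

end Filter

namespace Ultrafilter

/-- `W.IsComplete U`: `W` is `U`-complete. -/
def IsComplete (W : Ultrafilter Y) (U : Ultrafilter X) : Prop :=
  ∀ B : X → Set Y, (∀ x, B x ∈ W) → ∃ A ∈ U, (⋂ x ∈ A, B x) ∈ W

theorem isComplete_iff_prod_mem_or_compl_mem {U : Ultrafilter X} {W : Ultrafilter Y} :
    W.IsComplete U ↔
      ∀ S : Set (X × Y), S ∈ (U : Filter X) ×ˢ (W : Filter Y) ∨ Sᶜ ∈ (U : Filter X) ×ˢ W := by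
  constructor
  · intro hW S
    set T : Set X := {x | {y | (x, y) ∈ S} ∈ W}
    -- The fibre of `S` over `x ∈ T`, and its complement over `x ∉ T`, both lie in `W`.
    obtain ⟨A, hA, hB⟩ := hW (fun x => {y | (x, y) ∈ S ↔ x ∈ T}) fun x => by
      by_cases hx : x ∈ T
      · simp only [hx, iff_true]
        exact hx
      · simp only [hx, iff_false]
        exact W.compl_mem_iff_notMem.mpr hx
    have rect (P : Set X) (hP : P ∈ U) : (A ∩ P) ×ˢ (⋂ x ∈ A, {y | (x, y) ∈ S ↔ x ∈ T}) ∈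
        (U : Filter X) ×ˢ (W : Filter Y) :=
      prod_mem_prod (inter_mem hA hP) hB
    rcases U.mem_or_compl_mem T with hT | hT
    · refine .inl (mem_of_superset (rect T hT) ?_)
      rintro ⟨x, y⟩ ⟨⟨hxA, hxT⟩, hy⟩
      exact (mem_iInter₂.mp hy x hxA).mpr hxT
    · refine .inr (mem_of_superset (rect Tᶜ hT) ?_)
      rintro ⟨x, y⟩ ⟨⟨hxA, hxT⟩, hy⟩ hS
      exact hxT ((mem_iInter₂.mp hy x hxA).mp hS)
  · intro h B hB
    rcases h {p | p.2 ∈ B p.1} with hS | hS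
    · obtain ⟨A, hA, t, ht, hAt⟩ := mem_prod_iff.mp hS
      exact ⟨A, hA, mem_of_superset ht fun y hy =>
        mem_iInter₂.mpr fun x hx => hAt (mk_mem_prod hx hy)⟩
    · obtain ⟨x, hx⟩ := (Eventually.curry hS).exists
      obtain ⟨y, hyB, hy⟩ := W.nonempty_of_mem (W.inter_mem (hB x) hx)
      exact (hy hyB).elim

theorem IsComplete.symm {U : Ultrafilter X} {W : Ultrafilter Y} (h : W.IsComplete U) :
    U.IsComplete W :=
  isComplete_iff_prod_mem_or_compl_mem.mpr
    (forall_mem_or_compl_mem_prod_swap (isComplete_iff_prod_mem_or_compl_mem.mp h))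

end Ultrafilter

end

/-- For ultrafilters `U` on `X` and `W` on `Y`, `W` is `U`-complete iff `U` is
`W`-complete, where `W` is `U`-complete means: for every family `⟨B x : x ∈ X⟩` of sets in
`W` there is `A ∈ U` with `⋂_{x ∈ A} B x ∈ W`. -/
theorem stmt4 {X Y : Type*} (U : Ultrafilter X) (W : Ultrafilter Y) :
    (∀ B : X → Set Y, (∀ x, B x ∈ W) → ∃ A ∈ U, (⋂ x ∈ A, B x) ∈ W) ↔
      (∀ C : Y → Set X, (∀ y, C y ∈ U) → ∃ D ∈ W, (⋂ y ∈ D, C y) ∈ U) :=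
  ⟨Ultrafilter.IsComplete.symm, Ultrafilter.IsComplete.symm⟩
end

section
/- Suppose U is an ultrafilter on a set X and ⟨λ_α : α < η⟩ is an increasing sequence of infinite cardinals such that U is λ_α-decomposable for every α < η. Then there is a cardinal δ with sup_{α<η} λ_α ≤ δ ≤ ∏_{α<η} λ_α such that U is δ-decomposable. -/
/-! Combine the given decompositions `f i` into the single map `g x = (f i x)ᵢ` into `∏ λ i`,
and let `δ` be the least cardinality of an image `g[A₀]` with `A₀ ∈ U`. Projecting `g[A₀]` to
a coordinate gives `λ i ≤ δ`, and `δ ≤ ∏ λ i` trivially. By minimality of `A₀`, the map that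
agrees with `g` on `A₀` and is constant off `A₀` has image of size exactly `δ` on every member
of `U`; identifying `g[A₀]` with `δ` makes it a `δ`-decomposition. -/

open Cardinal

/-- `f : X → γ.out` is a `γ`-decomposition of `U` when every `A ∈ U` has image of
cardinality `γ`; `U` is `γ`-decomposable if such an `f` exists. (The type `γ.out` has
cardinality exactly `γ`.) -/
def IsDecomposable {X : Type u} (U : Ultrafilter X) (γ : Cardinal.{u}) : Prop :=
  ∃ f : X → Quotient.out γ, ∀ A ∈ U, #(f '' A) = γ

open Set

variable {X : Type u} {U : Ultrafilter X}

theorem IsDecomposable.of_forall_mk_image_eq {Y : Type u} (f : X → Y) {κ : Cardinal.{u}}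
    (hf : ∀ A ∈ U, #(f '' A) = κ) : IsDecomposable U κ := by
  have hrange : #(range f) = κ := by simpa only [image_univ] using hf univ Filter.univ_mem
  obtain ⟨e⟩ : Nonempty (range f ≃ κ.out) := Cardinal.eq.1 (by rw [hrange, mk_out])
  refine ⟨e ∘ rangeFactorization f, fun A hA => ?_⟩
  have hfA : f '' A = Subtype.val '' (rangeFactorization f '' A) := by rw [← image_comp]; rfl
  rw [image_comp, mk_image_eq e.injective, ← hf A hA, hfA, mk_image_eq Subtype.val_injective]

theorem Ultrafilter.exists_mem_forall_mk_image_le {Y : Type u} (U : Ultrafilter X) (g : X → Y) :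
    ∃ A₀ ∈ U, ∀ A ∈ U, #(g '' A₀) ≤ #(g '' A) := by
  obtain ⟨_, ⟨A₀, hA₀, rfl⟩, hmin⟩ := wellFounded_lt.has_min ((fun A => #(g '' A)) '' {A | A ∈ U})
    ⟨_, univ, Filter.univ_mem, rfl⟩
  exact ⟨A₀, hA₀, fun A hA => not_lt.1 (hmin _ ⟨A, hA, rfl⟩)⟩

theorem IsDecomposable.mk_image_of_forall_le {Y : Type u} (g : X → Y) {A₀ : Set X}
    (hA₀ : A₀ ∈ U) (hmin : ∀ A ∈ U, #(g '' A₀) ≤ #(g '' A)) : IsDecomposable U #(g '' A₀) := by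
  classical
  obtain ⟨x₀, hx₀⟩ := U.nonempty_of_mem hA₀
  refine .of_forall_mk_image_eq (A₀.piecewise g fun _ => g x₀) fun A hA => le_antisymm ?_ ?_
  · refine mk_le_mk_of_subset ?_
    rintro _ ⟨x, -, rfl⟩
    by_cases hx : x ∈ A₀
    · exact ⟨x, hx, by simp [hx]⟩
    · exact ⟨x₀, hx₀, by simp [hx]⟩
  · refine (hmin _ (Filter.inter_mem hA hA₀)).trans (mk_le_mk_of_subset ?_)
    rintro _ ⟨x, ⟨hxA, hxA₀⟩, rfl⟩
    exact ⟨x, hxA, piecewise_eq_of_mem _ _ _ hxA₀⟩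

theorem stmt6_general {X : Type u} (U : Ultrafilter X) {ι : Type u}
    (lam : ι → Cardinal.{u})
    (hdec : ∀ i, IsDecomposable U (lam i)) :
    ∃ δ : Cardinal.{u}, (⨆ i, lam i) ≤ δ ∧ δ ≤ Cardinal.prod lam ∧ IsDecomposable U δ := by
  choose f hf using hdec
  let g : X → ∀ i, (lam i).out := fun x i => f i x
  obtain ⟨A₀, hA₀, hmin⟩ := U.exists_mem_forall_mk_image_le g
  have hlam_le (i : ι) : lam i ≤ #(g '' A₀) := by
    rw [← hf i A₀ hA₀, show f i = Function.eval i ∘ g from rfl, image_comp]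
    exact mk_image_le
  exact ⟨_, ciSup_le' hlam_le, mk_set_le _, .mk_image_of_forall_le g hA₀ hmin⟩

/-- Lipparini: If `U` is an ultrafilter on `X` and `⟨λ i⟩` is an increasing
sequence of infinite cardinals such that `U` is `λ i`-decomposable for every `i`, then there
is a cardinal `δ` with `sup λ i ≤ δ ≤ ∏ λ i` such that `U` is `δ`-decomposable. -/
theorem stmt6 {X : Type u} (U : Ultrafilter X) {ι : Type u} [LinearOrder ι] [Nonempty ι]
    (lam : ι → Cardinal.{u}) (hmono : StrictMono lam) (hinf : ∀ i, ℵ₀ ≤ lam i)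
    (hdec : ∀ i, IsDecomposable U (lam i)) :
    ∃ δ : Cardinal.{u}, (⨆ i, lam i) ≤ δ ∧ δ ≤ Cardinal.prod lam ∧ IsDecomposable U δ :=
  stmt6_general U lam hdec
end

section
/- Suppose κ is an uncountable cardinal, M ⊆ V is a transitive model of ZFC with the κ-approximation property, and U is a κ-complete ultrafilter over a set X ∈ M. Then U ∩ M ∈ M. -/
/-!
By the approximation property it suffices that `(U ∩ M) ∩ σ ∈ M` for every `σ ∈ M` of size
`< κ`. By `κ`-completeness a single point `x ∈ X` decides membership in `U` for all subsets of
`X` lying in `σ`, so `(U ∩ M) ∩ σ = {B ∈ σ : B ⊆ X, x ∈ B}`, which `M` can form from `σ`, `X`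
and `x`.
-/

open Cardinal

universe u

/-- A transitive class `M ⊆ V` that is a model of ZFC (we record transitivity together with
the instances of the ZFC axioms in `M` that are relevant here: emptyset, infinity, pairing,
union, relative powerset, and closure under intersections and differences). -/
structure IsTransitiveZFCModel (M : Set ZFSet.{u}) : Prop where
  transitive : ∀ x ∈ M, ∀ y ∈ x, y ∈ M
  empty_mem : (∅ : ZFSet.{u}) ∈ M
  omega_mem : ZFSet.omega ∈ M
  pair_mem : ∀ x ∈ M, ∀ y ∈ M, ({x, y} : ZFSet) ∈ M
  sUnion_mem : ∀ x ∈ M, ZFSet.sUnion x ∈ M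
  powersetRel_mem : ∀ x ∈ M, ZFSet.sep (· ∈ M) (ZFSet.powerset x) ∈ M
  inter_mem : ∀ x ∈ M, ∀ y ∈ M, x ∩ y ∈ M
  diff_mem : ∀ x ∈ M, ∀ y ∈ M, x \ y ∈ M

namespace IsTransitiveZFCModel

variable {M : Set ZFSet.{u}} (hM : IsTransitiveZFCModel M)
include hM

theorem sep_subset_mem {σ Y : ZFSet.{u}} (hσ : σ ∈ M) (hY : Y ∈ M) :
    σ.sep (· ⊆ Y) ∈ M := by
  convert hM.inter_mem σ hσ _ (hM.powersetRel_mem Y hY) using 1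
  ext B
  simp only [ZFSet.mem_sep, ZFSet.mem_inter, ZFSet.mem_powerset]
  exact ⟨fun h => ⟨h.1, h.2, hM.transitive σ hσ B h.1⟩, fun h => ⟨h.1, h.2.1⟩⟩

/-- The members of `σ` omitting `x` are those contained in `⋃₀ σ \ {x}`. -/
theorem sep_mem_mem {σ x : ZFSet.{u}} (hσ : σ ∈ M) (hx : x ∈ M) :
    σ.sep (x ∈ ·) ∈ M := by
  have hxx : ({x, x} : ZFSet) ∈ M := hM.pair_mem x hx x hx
  have hrest : ZFSet.sUnion σ \ {x, x} ∈ M := hM.diff_mem _ (hM.sUnion_mem σ hσ) _ hxx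
  convert hM.diff_mem σ hσ _ (hM.sep_subset_mem hσ hrest) using 1
  ext B
  simp only [ZFSet.mem_sep, ZFSet.mem_sdiff, ZFSet.subset_def, ZFSet.mem_pair, or_self]
  constructor
  · rintro ⟨hB, hxB⟩
    exact ⟨hB, fun h => (h.2 hxB).2 rfl⟩
  · rintro ⟨hB, hnot⟩
    refine ⟨hB, ?_⟩
    by_contra hxB
    exact hnot ⟨hB, fun y hy => ⟨ZFSet.mem_sUnion_of_mem hy hB, fun hyx => hxB (hyx ▸ hy)⟩⟩

end IsTransitiveZFCModel

section Ultrafilter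

variable {κ : Cardinal.{u + 1}} {X U : ZFSet.{u}}

open Classical in
noncomputable def sideIn (U X B : ZFSet.{u}) : ZFSet.{u} :=
  if B ∈ U then B else X \ B

theorem sideIn_mem (hultra : ∀ A : ZFSet.{u}, A ⊆ X → A ∈ U ∨ X \ A ∈ U) {B : ZFSet.{u}}
    (hB : B ⊆ X) : sideIn U X B ∈ U := by
  unfold sideIn
  split_ifs with hBU
  · exact hBU
  · exact (hultra B hB).resolve_left hBU

theorem mem_iff_of_mem_sideIn {B x : ZFSet.{u}} (hx : x ∈ sideIn U X B) : B ∈ U ↔ x ∈ B := by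
  unfold sideIn at hx
  split_ifs at hx with hBU
  · exact iff_of_true hBU hx
  · exact iff_of_false hBU (ZFSet.mem_sdiff.1 hx).2

variable (hUsub : ∀ A ∈ U, A ⊆ X) (hproper : (∅ : ZFSet.{u}) ∉ U)
  (hultra : ∀ A : ZFSet.{u}, A ⊆ X → A ∈ U ∨ X \ A ∈ U)
include hUsub hproper

theorem exists_mem_of_mem {A : ZFSet.{u}} (hA : A ∈ U) : ∃ x ∈ X, x ∈ A := by
  obtain ⟨x, hx⟩ := (ZFSet.eq_empty_or_nonempty A).resolve_left (fun h => hproper (h ▸ hA))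
  exact ⟨x, hUsub A hA hx, hx⟩

include hultra

/-- By `κ`-completeness the sides in `U` of the members of `τ` have an intersection in `U`;
any point of it works. -/
theorem exists_forall_mem_iff_of_mk_lt
    (hcomplete : ∀ σ : ZFSet.{u}, σ ≠ ∅ → σ ⊆ U → #σ.toSet < κ → ZFSet.sInter σ ∈ U)
    {τ : ZFSet.{u}} (hτX : ∀ B ∈ τ, B ⊆ X) (hτκ : #τ.toSet < κ) :
    ∃ x ∈ X, ∀ B ∈ τ, B ∈ U ↔ x ∈ B := by
  rcases ZFSet.eq_empty_or_nonempty τ with rfl | ⟨B₀, hB₀⟩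
  · obtain ⟨x, hx, -⟩ := exists_mem_of_mem hUsub hproper
      ((hultra ∅ (ZFSet.empty_subset X)).resolve_left hproper)
    exact ⟨x, hx, fun B hB => absurd hB (ZFSet.notMem_empty B)⟩
  have : ZFSet.Definable₁ (sideIn U X) := Classical.allZFSetDefinable _
  set S := ZFSet.image (sideIn U X) τ
  have hSU : S ⊆ U := fun C hC => by
    obtain ⟨B, hB, rfl⟩ := ZFSet.mem_image.1 hC
    exact sideIn_mem hultra (hτX B hB)
  have hSne : S ≠ ∅ := fun h =>
    (ZFSet.eq_empty S).1 h _ (ZFSet.mem_image.2 ⟨B₀, hB₀, rfl⟩)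
  have hSκ : #S.toSet < κ := by
    rw [show S.toSet = sideIn U X '' τ.toSet from ZFSet.coe_image _ _]
    exact Cardinal.mk_image_le.trans_lt hτκ
  obtain ⟨x, hxX, hx⟩ := exists_mem_of_mem hUsub hproper (hcomplete S hSne hSU hSκ)
  exact ⟨x, hxX, fun B hB =>
    mem_iff_of_mem_sideIn (ZFSet.mem_of_mem_sInter hx (ZFSet.mem_image.2 ⟨B, hB, rfl⟩))⟩

end Ultrafilter

theorem stmt9_general (κ : Cardinal.{u + 1})
    (M : Set ZFSet.{u}) (hM : IsTransitiveZFCModel M)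
    -- the κ-approximation property: every set `A ⊆ M` all of whose small approximations
    -- `A ∩ σ` (for `σ ∈ M` of size `< κ`) lie in `M` is itself in `M`
    (happrox : ∀ A : ZFSet.{u}, A.toSet ⊆ M →
      (∀ σ ∈ M, #σ.toSet < κ → A ∩ σ ∈ M) → A ∈ M)
    (X : ZFSet.{u}) (hX : X ∈ M)
    -- `U` is an ultrafilter over `X` ...
    (U : ZFSet.{u}) (hUsub : ∀ A ∈ U, A ⊆ X) (hproper : (∅ : ZFSet.{u}) ∉ U)
    (hultra : ∀ A : ZFSet.{u}, A ⊆ X → A ∈ U ∨ X \ A ∈ U)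
    -- ... that is κ-complete: intersections of fewer than κ members of U are in U
    (hcomplete : ∀ σ : ZFSet.{u}, σ ≠ ∅ → σ ⊆ U → #σ.toSet < κ → ZFSet.sInter σ ∈ U) :
    ZFSet.sep (· ∈ M) U ∈ M := by
  refine happrox _ (fun B hB => (ZFSet.mem_sep.1 hB).2) fun σ hσ hσκ => ?_
  set τ := σ.sep (· ⊆ X)
  have hτκ : #τ.toSet < κ :=
    (Cardinal.mk_le_mk_of_subset fun _ hB => ZFSet.sep_subset hB).trans_lt hσκ
  obtain ⟨x, hxX, hx⟩ := exists_forall_mem_iff_of_mk_lt hUsub hproper hultra hcomplete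
    (fun B hB => (ZFSet.mem_sep.1 hB).2) hτκ
  have hrestrict : ZFSet.sep (· ∈ M) U ∩ σ = τ.sep (x ∈ ·) := by
    ext B
    simp only [τ, ZFSet.mem_inter, ZFSet.mem_sep]
    constructor
    · rintro ⟨⟨hBU, -⟩, hBσ⟩
      have hBX := hUsub B hBU
      exact ⟨⟨hBσ, hBX⟩, (hx B (ZFSet.mem_sep.2 ⟨hBσ, hBX⟩)).1 hBU⟩
    · rintro ⟨⟨hBσ, hBX⟩, hxB⟩
      exact ⟨⟨(hx B (ZFSet.mem_sep.2 ⟨hBσ, hBX⟩)).2 hxB, hM.transitive σ hσ B hBσ⟩, hBσ⟩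
  rw [hrestrict]
  exact hM.sep_mem_mem (hM.sep_subset_mem hσ hX) (hM.transitive X hX x hxX)

/-- Suppose `κ` is an uncountable cardinal, `M ⊆ V` is a transitive model of ZFC
with the `κ`-approximation property, and `U` is a `κ`-complete ultrafilter over a set
`X ∈ M`.  Then `U ∩ M ∈ M`. -/
theorem stmt9 (κ : Cardinal.{u + 1}) (hκ : ℵ₀ < κ)
    (M : Set ZFSet.{u}) (hM : IsTransitiveZFCModel M)
    -- the κ-approximation property: every set `A ⊆ M` all of whose small approximations
    -- `A ∩ σ` (for `σ ∈ M` of size `< κ`) lie in `M` is itself in `M`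
    (happrox : ∀ A : ZFSet.{u}, A.toSet ⊆ M →
      (∀ σ ∈ M, #σ.toSet < κ → A ∩ σ ∈ M) → A ∈ M)
    (X : ZFSet.{u}) (hX : X ∈ M)
    -- `U` is an ultrafilter over `X` ...
    (U : ZFSet.{u}) (hUsub : ∀ A ∈ U, A ⊆ X) (hproper : (∅ : ZFSet.{u}) ∉ U)
    (hup : ∀ A ∈ U, ∀ B : ZFSet.{u}, A ⊆ B → B ⊆ X → B ∈ U)
    (hint : ∀ A ∈ U, ∀ B ∈ U, A ∩ B ∈ U)
    (hultra : ∀ A : ZFSet.{u}, A ⊆ X → A ∈ U ∨ X \ A ∈ U)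
    -- ... that is κ-complete: intersections of fewer than κ members of U are in U
    (hcomplete : ∀ σ : ZFSet.{u}, σ ≠ ∅ → σ ⊆ U → #σ.toSet < κ → ZFSet.sInter σ ∈ U) :
    ZFSet.sep (· ∈ M) U ∈ M :=
  stmt9_general κ M hM happrox X hX U hUsub hproper hultra hcomplete
end

section
/- Suppose U is a countably complete ultrafilter on a set X, γ is a cardinal of countable cofinality, and ⟨λ_n : n < ω⟩ is an increasing sequence of cardinals cofinal in γ such that U is λ_n-decomposable for every n. Then U is not γ-decomposable but is δ-decomposable for some δ with γ < δ ≤ ∏_{n<ω} λ_n; in particular, assuming ∏_{n<ω} λ_n = γ⁺, U is γ⁺-decomposable. -/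
/-! If `f` witnessed `γ`-decomposability, the preimages under `f` of the initial segments of
length `λ n` of a well-order of type `γ` would be countably many sets covering `X`, so by countable
completeness one of them is in `U`, although its image has size at most `λ n < γ`. Combining the
`λ n`-decompositions gives `g : X → ∏ n, λ n`; the least size `δ` of an image `g[A]` with `A ∈ U`
is a degree of decomposability of `U`, it bounds every `λ n` (project to the `n`-th coordinate),
it is at most `∏ n, λ n`, and it differs from `γ` by the first part. -/

open Cardinal

open Set

theorem Cardinal.exists_iUnion_eq_univ_mk_eq {α : Type u} {ι : Sort*} (lam : ι → Cardinal.{u})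
    (hlt : ∀ i, lam i < #α) (hsup : ⨆ i, lam i = #α) :
    ∃ B : ι → Set α, ⋃ i, B i = Set.univ ∧ ∀ i, #(B i) = lam i := by
  obtain ⟨r, _, hr⟩ := exists_ord_eq α
  have hbelow : ∀ i, (lam i).ord < Ordinal.type r := fun i => hr ▸ ord_lt_ord.2 (hlt i)
  refine ⟨fun i => {a | r a (Ordinal.enum r ⟨_, hbelow i⟩)}, eq_univ_of_forall fun a => ?_,
    fun i => ?_⟩
  · have hbdd : BddAbove (range lam) := ⟨#α, forall_mem_range.2 fun i => (hlt i).le⟩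
    obtain ⟨i, hi⟩ := (lt_ciSup_iff' hbdd).1 (hsup ▸ card_typein_lt a hr)
    refine mem_iUnion.2 ⟨i, (Ordinal.typein_lt_typein r).1 ?_⟩
    rwa [Ordinal.typein_enum, lt_ord]
  · change #{a // r a _} = _
    rw [← Ordinal.card_typein, Ordinal.typein_enum, card_ord]

section Decomposable

variable {X : Type u} {U : Ultrafilter X}

theorem Ultrafilter.exists_mem_of_iUnion_eq_univ [CountableInterFilter (U : Filter X)]
    {ι : Sort*} [Countable ι] {A : ι → Set X} (hA : ⋃ i, A i = Set.univ) : ∃ i, A i ∈ U := by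
  by_contra! h
  have hcompl : (⋂ i, (A i)ᶜ) ∈ U :=
    countable_iInter_mem.2 fun i => U.compl_mem_iff_notMem.2 (h i)
  simp [← compl_iUnion, hA] at hcompl

theorem not_isDecomposable_of_iSup_eq [CountableInterFilter (U : Filter X)] {γ : Cardinal.{u}}
    {ι : Sort*} [Countable ι] (lam : ι → Cardinal.{u}) (hlt : ∀ i, lam i < γ)
    (hsup : ⨆ i, lam i = γ) : ¬ IsDecomposable U γ := by
  rintro ⟨f, hf⟩
  obtain ⟨B, hcover, hB⟩ :=
    exists_iUnion_eq_univ_mk_eq lam (by rwa [mk_out]) (by rwa [mk_out])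
  obtain ⟨i, hi⟩ := U.exists_mem_of_iUnion_eq_univ (A := fun i => f ⁻¹' B i)
    (by rw [← preimage_iUnion, hcover, preimage_univ])
  have hγ : γ ≤ lam i := calc
    γ = #(f '' (f ⁻¹' B i)) := (hf _ hi).symm
    _ ≤ #(B i) := mk_le_mk_of_subset (image_preimage_subset _ _)
    _ = lam i := hB i
  exact (hlt i).not_ge hγ

theorem isDecomposable_of_forall_mk_image_eq {α : Type u} {γ : Cardinal.{u}} (f : X → α)
    (hf : ∀ A ∈ U, #(f '' A) = γ) : IsDecomposable U γ := by
  obtain ⟨e⟩ : Nonempty (range f ≃ γ.out) := by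
    rw [← Cardinal.eq, mk_out, ← image_univ]
    exact hf _ U.univ_mem
  refine ⟨e ∘ rangeFactorization f, fun A hA => ?_⟩
  rw [image_comp, mk_image_eq e.injective, ← hf A hA, ← mk_image_eq Subtype.val_injective,
    image_image]
  rfl

theorem exists_mem_isDecomposable_mk_image {α : Type u} (g : X → α) :
    ∃ A₀ ∈ U, IsDecomposable U #(g '' A₀) := by
  classical
  obtain ⟨A₀, hA₀, hmin⟩ := exists_minimalFor_of_wellFoundedLT (· ∈ U) (fun A => #(g '' A))
    ⟨Set.univ, U.univ_mem⟩
  obtain ⟨x₀, hx₀⟩ := U.nonempty_of_mem hA₀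
  -- `g` moved onto `g[A₀]`, so that no image exceeds the minimal one
  let g' : X → α := fun x => if x ∈ A₀ then g x else g x₀
  refine ⟨A₀, hA₀, isDecomposable_of_forall_mk_image_eq g' fun A hA => le_antisymm ?_ ?_⟩
  · refine mk_le_mk_of_subset ?_
    rintro _ ⟨x, -, rfl⟩
    by_cases hx : x ∈ A₀
    · exact ⟨x, hx, by simp [g', hx]⟩
    · exact ⟨x₀, hx₀, by simp [g', hx]⟩
  · calc #(g '' A₀) ≤ #(g '' (A ∩ A₀)) :=
          (le_total _ _).elim id (hmin (U.inter_mem hA hA₀))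
      _ ≤ #(g' '' A) := by
        refine mk_le_mk_of_subset ?_
        rintro _ ⟨x, ⟨hxA, hx⟩, rfl⟩
        exact ⟨x, hxA, by simp [g', hx]⟩

theorem exists_isDecomposable_between {ι : Type} (lam : ι → Cardinal.{u})
    (hdec : ∀ i, IsDecomposable U (lam i)) :
    ∃ δ, (⨆ i, lam i) ≤ δ ∧ δ ≤ Cardinal.prod lam ∧ IsDecomposable U δ := by
  choose F hF using hdec
  let g : X → ∀ i, (lam i).out := fun x i => F i x
  obtain ⟨A₀, hA₀, hdecA₀⟩ := exists_mem_isDecomposable_mk_image g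
  refine ⟨_, ciSup_le' fun i => ?_, mk_set_le _, hdecA₀⟩
  calc lam i = #(F i '' A₀) := (hF i A₀ hA₀).symm
    _ = #((fun h => h i) '' (g '' A₀)) := by rw [image_image]
    _ ≤ #(g '' A₀) := mk_image_le

end Decomposable

theorem stmt18_general {X : Type u} (U : Ultrafilter X)
    (hcc : ∀ s : Set (Set X), s.Countable → (∀ A ∈ s, A ∈ U) → ⋂₀ s ∈ U)
    (γ : Cardinal.{u}) (lam : ℕ → Cardinal.{u})
    (hlt : ∀ n, lam n < γ) (hsup : (⨆ n, lam n) = γ)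
    (hdec : ∀ n, IsDecomposable U (lam n)) :
    (¬ IsDecomposable U γ) ∧
      (∃ δ : Cardinal.{u}, γ < δ ∧ δ ≤ Cardinal.prod lam ∧ IsDecomposable U δ) ∧
      (Cardinal.prod lam = Order.succ γ → IsDecomposable U (Order.succ γ)) := by
  have : CountableInterFilter (U : Filter X) := ⟨hcc⟩
  have hnot : ¬ IsDecomposable U γ := not_isDecomposable_of_iSup_eq lam hlt hsup
  obtain ⟨δ, hγδ, hδ, hdecδ⟩ := exists_isDecomposable_between lam hdec
  have hγδ' : γ < δ := (hsup ▸ hγδ).lt_of_ne (by rintro rfl; exact hnot hdecδ)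
  refine ⟨hnot, ⟨δ, hγδ', hδ, hdecδ⟩, fun hprod => ?_⟩
  rwa [← le_antisymm (hprod ▸ hδ) (Order.succ_le_of_lt hγδ')]

/-- Suppose `U` is a countably complete ultrafilter on `X`, `γ` is a cardinal of
countable cofinality, and `⟨λ n : n < ω⟩` is an increasing sequence of cardinals cofinal in
`γ` such that `U` is `λ n`-decomposable for every `n`.  Then `U` is not `γ`-decomposable but
is `δ`-decomposable for some `δ` with `γ < δ ≤ ∏_{n<ω} λ n`; in particular, if
`∏_{n<ω} λ n = γ⁺`, then `U` is `γ⁺`-decomposable. -/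
theorem stmt18 {X : Type u} (U : Ultrafilter X)
    (hcc : ∀ s : Set (Set X), s.Countable → (∀ A ∈ s, A ∈ U) → ⋂₀ s ∈ U)
    (γ : Cardinal.{u}) (lam : ℕ → Cardinal.{u}) (hmono : StrictMono lam)
    (hlt : ∀ n, lam n < γ) (hsup : (⨆ n, lam n) = γ)
    (hdec : ∀ n, IsDecomposable U (lam n)) :
    (¬ IsDecomposable U γ) ∧
      (∃ δ : Cardinal.{u}, γ < δ ∧ δ ≤ Cardinal.prod lam ∧ IsDecomposable U δ) ∧
      (Cardinal.prod lam = Order.succ γ → IsDecomposable U (Order.succ γ)) :=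
  stmt18_general U hcc γ lam hlt hsup hdec
end
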